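/- arXiv:1707.00928 — 5 statements merged into one kernel-verified Lean document; each statement's English description precedes it below -/
import Mathlib

section
/- Let p > q be coprime natural numbers with p/q = [a₁,...,a_k] and p/(p−q) = [b₁,...,b_l] as Hirzebruch–Jung continued fractions with all entries ≥ 2. Then p²/(pq−1) = [a₁, ..., a_{k−1}, a_k + b_l, b_{l−1}, ..., b₁]. -/
/-- Hirzebruch–Jung continued fraction `[a₁,…,a_k] = a₁ - 1/(a₂ - 1/(⋯ - 1/a_k))`.
Note `1/0 = 0` in `ℚ`, so `hj [a] = a`. -/
def hj : List ℚ → ℚ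
  | [] => 0
  | a :: l => a - 1 / hj l

/-- HJ continued fraction of a list of naturals. -/
def hjN (l : List ℕ) : ℚ := hj (l.map (fun x => (x : ℚ)))

/-!
Encode `[a₁,…,a_k]` by the matrix product `M = ∏ !![aᵢ, -1; 1, 0]`, whose first column is
`(p, q)` when `p / q = [a₁,…,a_k]` is in lowest terms. Splitting `a_k + b_l` as
`!![a_k + b_l, -1; 1, 0] = !![a_k, -1; 1, 0] * S * !![b_l, -1; 1, 0]` turns the product for
`[a₁,…,a_k + b_l,…,b₁]` into `M_A * S * M_Bʳᵉᵛ`, where reversing a list conjugates the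
transposed product by `diag(1, -1)`. Its first column is `(p², pq - 1)` because the
top-right entries of `M_A` and `M_B` add up to `-p`.
-/

open Matrix

def hjMat (x : ℤ) : Matrix (Fin 2) (Fin 2) ℤ := !![x, -1; 1, 0]

def hjProd (l : List ℕ) : Matrix (Fin 2) (Fin 2) ℤ := (l.map fun x => hjMat x).prod

def signDiag : Matrix (Fin 2) (Fin 2) ℤ := !![1, 0; 0, -1]

def quarterTurn : Matrix (Fin 2) (Fin 2) ℤ := !![0, 1; -1, 0]

@[simp]
theorem hjProd_nil : hjProd [] = 1 := rfl

theorem hjProd_cons (x : ℕ) (l : List ℕ) : hjProd (x :: l) = hjMat x * hjProd l := rfl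

theorem hjProd_cons_eq (x : ℕ) (l : List ℕ) :
    hjProd (x :: l) = !![x * hjProd l 0 0 - hjProd l 1 0, x * hjProd l 0 1 - hjProd l 1 1;
      hjProd l 0 0, hjProd l 0 1] := by
  ext i j; fin_cases i <;> fin_cases j <;>
    simp [hjProd_cons, hjMat, mul_apply, Fin.sum_univ_two, sub_eq_add_neg]

theorem hjProd_singleton (x : ℕ) : hjProd [x] = hjMat x := by
  simp [hjProd]

theorem hjProd_append (l₁ l₂ : List ℕ) : hjProd (l₁ ++ l₂) = hjProd l₁ * hjProd l₂ := by
  simp [hjProd]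

theorem det_hjProd (l : List ℕ) : (hjProd l).det = 1 := by
  induction l with
  | nil => simp
  | cons x l ih => rw [hjProd_cons, det_mul, ih]; simp [hjMat]

theorem hjMat_add (x y : ℤ) : hjMat (x + y) = hjMat x * quarterTurn * hjMat y := by
  simp [hjMat, quarterTurn, add_comm]

theorem transpose_hjMat_mul_signDiag (x : ℤ) : (hjMat x)ᵀ * signDiag = signDiag * hjMat x := by
  ext i j; fin_cases i <;> fin_cases j <;> simp [hjMat, signDiag, mul_apply, Fin.sum_univ_two]

theorem hjProd_reverse (l : List ℕ) : hjProd l.reverse = signDiag * (hjProd l)ᵀ * signDiag := by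
  induction l with
  | nil => ext i j; fin_cases i <;> fin_cases j <;> simp [signDiag]
  | cons x l ih =>
    rw [List.reverse_cons, hjProd_append, ih, hjProd_singleton, hjProd_cons, transpose_mul]
    simp only [Matrix.mul_assoc, ← transpose_hjMat_mul_signDiag]

theorem hjProd_append_add_reverse (as bs : List ℕ) (a b : ℕ) :
    hjProd (as ++ [a + b] ++ bs.reverse) =
      hjProd (as ++ [a]) * quarterTurn * hjProd (bs ++ [b]).reverse := by
  simp only [hjProd_append, List.reverse_append, List.reverse_singleton, List.singleton_append,
    hjProd_cons, hjProd_nil, Matrix.one_mul, Nat.cast_add, hjMat_add, Matrix.mul_assoc]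

section

variable {l : List ℕ} (hl : ∀ x ∈ l, 2 ≤ x)
include hl

theorem hjProd_one_zero_nonneg_lt : 0 ≤ hjProd l 1 0 ∧ hjProd l 1 0 < hjProd l 0 0 := by
  induction l with
  | nil => simp
  | cons x l ih =>
    obtain ⟨hc, hca⟩ := ih fun y hy => hl y (List.mem_cons_of_mem _ hy)
    have hx : (2 : ℤ) ≤ x := by exact_mod_cast hl x List.mem_cons_self
    simp only [hjProd_cons_eq, of_apply, cons_val', cons_val_zero, cons_val_one, empty_val',
      cons_val_fin_one]
    constructor <;> nlinarith

theorem hjProd_one_zero_pos_lt (hne : l ≠ []) :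
    0 < hjProd l 1 0 ∧ hjProd l 1 0 < hjProd l 0 0 := by
  obtain ⟨x, l, rfl⟩ := List.exists_cons_of_ne_nil hne
  refine ⟨?_, (hjProd_one_zero_nonneg_lt hl).2⟩
  obtain ⟨hc, hca⟩ := hjProd_one_zero_nonneg_lt fun y hy => hl y (List.mem_cons_of_mem _ hy)
  simpa [hjProd_cons_eq] using hc.trans_lt hca

theorem hjProd_zero_one_neg_lt (hne : l ≠ []) :
    -hjProd l 0 0 < hjProd l 0 1 ∧ hjProd l 0 1 < 0 := by
  have hrev := hjProd_one_zero_pos_lt (l := l.reverse) (by simpa using hl) (by simpa using hne)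
  rw [hjProd_reverse] at hrev
  simp [mul_apply, vecMul, dotProduct, Fin.sum_univ_two, signDiag] at hrev
  constructor <;> linarith

theorem hjN_eq_div : hjN l = hjProd l 0 0 / hjProd l 1 0 := by
  induction l with
  | nil => simp [hjN, hj]
  | cons x l ih =>
    have ha : (hjProd l 0 0 : ℚ) ≠ 0 := by
      obtain ⟨hc, hca⟩ := hjProd_one_zero_nonneg_lt fun y hy => hl y (List.mem_cons_of_mem _ hy)
      exact_mod_cast (hc.trans_lt hca).ne'
    have hcons : hjN (x :: l) = x - 1 / hjN l := rfl
    rw [hcons, ih fun y hy => hl y (List.mem_cons_of_mem _ hy), one_div_div, hjProd_cons_eq]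
    simp only [of_apply, cons_val', cons_val_zero, cons_val_one, empty_val', cons_val_fin_one]
    push_cast
    field_simp

theorem hjProd_first_column_of_hjN_eq (hne : l ≠ []) {p q : ℕ} (hq : 0 < q) (hco : p.Coprime q)
    (h : hjN l = p / q) : hjProd l 0 0 = p ∧ hjProd l 1 0 = q := by
  have hdet := det_hjProd l
  rw [det_fin_two] at hdet
  have hcop : IsCoprime (hjProd l 0 0) (hjProd l 1 0) :=
    ⟨hjProd l 1 1, -hjProd l 0 1, by linear_combination hdet⟩
  rw [Int.isCoprime_iff_gcd_eq_one, Int.gcd_eq_natAbs] at hcop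
  refine Rat.div_int_inj (hjProd_one_zero_pos_lt hl hne).1 (by exact_mod_cast hq) hcop
    (by simpa using hco) ?_
  simpa using (hjN_eq_div hl).symm.trans h

end

/-- The top-right entries are minus the numerators of `[a₁,…,a_{k-1}]` and `[b₁,…,b_{l-1}]`;
by `det = 1` they are inverses of `-q` and `q` modulo `p`, and both lie in `(-p, 0)`. -/
theorem hjProd_zero_one_add_eq_neg {A B : List ℕ} (hA : ∀ x ∈ A, 2 ≤ x) (hB : ∀ x ∈ B, 2 ≤ x)
    (hAne : A ≠ []) (hBne : B ≠ []) {p q : ℤ} (hco : IsCoprime p q)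
    (hpA : hjProd A 0 0 = p) (hqA : hjProd A 1 0 = q)
    (hpB : hjProd B 0 0 = p) (hqB : hjProd B 1 0 = p - q) :
    hjProd A 0 1 + hjProd B 0 1 = -p := by
  have hdetA := det_hjProd A
  have hdetB := det_hjProd B
  rw [det_fin_two, hpA, hqA] at hdetA
  rw [det_fin_two, hpB, hqB] at hdetB
  have hbA := hjProd_zero_one_neg_lt hA hAne
  have hbB := hjProd_zero_one_neg_lt hB hBne
  rw [hpA] at hbA
  rw [hpB] at hbB
  have hdvd : p ∣ hjProd A 0 1 + hjProd B 0 1 + p := by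
    refine dvd_add (hco.dvd_of_dvd_mul_right ⟨hjProd A 1 1 - hjProd B 1 1 + hjProd B 0 1, ?_⟩)
      dvd_rfl
    linear_combination hdetB - hdetA
  have := Int.eq_zero_of_abs_lt_dvd hdvd (abs_lt.mpr ⟨by linarith, by linarith⟩)
  linarith

theorem hjProd_append_add_reverse_first_column {as bs : List ℕ} {a b : ℕ} {p q : ℤ}
    (hpA : hjProd (as ++ [a]) 0 0 = p) (hqA : hjProd (as ++ [a]) 1 0 = q)
    (hpB : hjProd (bs ++ [b]) 0 0 = p)
    (hsum : hjProd (as ++ [a]) 0 1 + hjProd (bs ++ [b]) 0 1 = -p) :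
    hjProd (as ++ [a + b] ++ bs.reverse) 0 0 = p ^ 2 ∧
      hjProd (as ++ [a + b] ++ bs.reverse) 1 0 = p * q - 1 := by
  have hdet := det_hjProd (as ++ [a])
  rw [det_fin_two, hpA, hqA] at hdet
  rw [hjProd_append_add_reverse, hjProd_reverse]
  simp only [mul_apply, Fin.sum_univ_two, transpose_apply, quarterTurn, signDiag, of_apply,
    cons_val', cons_val_zero, cons_val_one, empty_val', cons_val_fin_one, hpA, hqA, hpB]
  constructor
  · linear_combination (-p) * hsum
  · linear_combination (-q) * hsum - hdet

theorem stmt4 (p q : ℕ) (hq : 1 ≤ q) (hpq : q < p) (hco : Nat.Coprime p q)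
    (as : List ℕ) (ak : ℕ) (bs : List ℕ) (bl : ℕ)
    (ha2 : ∀ x ∈ as ++ [ak], 2 ≤ x) (hb2 : ∀ x ∈ bs ++ [bl], 2 ≤ x)
    (hcfa : hjN (as ++ [ak]) = (p : ℚ) / q)
    (hcfb : hjN (bs ++ [bl]) = (p : ℚ) / ((p - q : ℕ) : ℚ)) :
    hjN (as ++ [ak + bl] ++ bs.reverse) = ((p ^ 2 : ℕ) : ℚ) / ((p * q - 1 : ℕ) : ℚ) := by
  have hcoB : p.Coprime (p - q) := (Nat.coprime_self_sub_right hpq.le).mpr hco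
  obtain ⟨hpA, hqA⟩ := hjProd_first_column_of_hjN_eq ha2 (by simp) hq hco hcfa
  obtain ⟨hpB, hqB⟩ :=
    hjProd_first_column_of_hjN_eq hb2 (by simp) (Nat.sub_pos_of_lt hpq) hcoB hcfb
  rw [Nat.cast_sub hpq.le] at hqB
  have hsum := hjProd_zero_one_add_eq_neg ha2 hb2 (by simp) (by simp)
    (Nat.isCoprime_iff_coprime.mpr hco) hpA hqA hpB hqB
  have h2 : ∀ x ∈ as ++ [ak + bl] ++ bs.reverse, 2 ≤ x := by
    simp only [List.mem_append, List.mem_singleton, List.mem_reverse] at ha2 hb2 ⊢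
    grind
  obtain ⟨hnum, hden⟩ := hjProd_append_add_reverse_first_column hpA hqA hpB hsum
  rw [hjN_eq_div h2, hnum, hden, Nat.cast_sub (Nat.mul_pos (by omega) hq)]
  push_cast
  rfl
end

section
/- Let p > q be coprime natural numbers with p/q = [a₁,...,a_k] and p/(p−q) = [b₁,...,b_l] as Hirzebruch–Jung continued fractions with all entries ≥ 2. Then p²/(pq+1) = [a₁, ..., a_{k−1}, a_k, 2, b_l, b_{l−1}, ..., b₁]. -/
/-- Convergent data `(P, Q, P', Q')` for a HJ continued fraction,
corresponding to the matrix product `∏ [[c, -1],[1, 0]] = [[P, -P'],[Q, -Q']]`. -/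
def km : List ℕ → ℤ × ℤ × ℤ × ℤ
  | [] => (1, 0, 0, -1)
  | c :: l =>
    ((c : ℤ) * (km l).1 - (km l).2.1, (km l).1,
     (c : ℤ) * (km l).2.2.1 - (km l).2.2.2, (km l).2.2.1)

def comb (u v : ℤ × ℤ × ℤ × ℤ) : ℤ × ℤ × ℤ × ℤ :=
  (u.1 * v.1 - u.2.2.1 * v.2.1, u.2.1 * v.1 - u.2.2.2 * v.2.1,
   u.1 * v.2.2.1 - u.2.2.1 * v.2.2.2, u.2.1 * v.2.2.1 - u.2.2.2 * v.2.2.2)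

lemma km_append (l₁ l₂ : List ℕ) : km (l₁ ++ l₂) = comb (km l₁) (km l₂) := by
  induction l₁ with
  | nil => simp [km, comb]
  | cons c l ih =>
    simp only [List.cons_append, km]
    refine Prod.ext ?_ (Prod.ext ?_ (Prod.ext ?_ ?_)) <;> simp [ih, comb] <;> ring

lemma km_reverse (l : List ℕ) :
    km l.reverse = ((km l).1, (km l).2.2.1, (km l).2.1, (km l).2.2.2) := by
  induction l with
  | nil => simp [km]
  | cons c l ih =>
    rw [List.reverse_cons, km_append, ih]
    refine Prod.ext ?_ (Prod.ext ?_ (Prod.ext ?_ ?_)) <;> simp [km, comb] <;> ring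

lemma km_det (l : List ℕ) : (km l).2.2.1 * (km l).2.1 - (km l).1 * (km l).2.2.2 = 1 := by
  induction l with
  | nil => simp [km]
  | cons c l ih => simp only [km]; linear_combination ih

lemma km_main (l : List ℕ) (h2 : ∀ x ∈ l, 2 ≤ x) :
    hjN l = ((km l).1 : ℚ) / ((km l).2.1 : ℚ) ∧ 1 ≤ (km l).1 ∧
      (l ≠ [] → 0 ≤ (km l).2.2.2 ∧ (km l).2.2.2 + 1 ≤ (km l).2.2.1 ∧
        (km l).2.2.2 + 1 ≤ (km l).2.1 ∧
        (km l).2.1 - (km l).2.2.2 ≤ (km l).1 - (km l).2.2.1) := by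
  induction l with
  | nil => simp [hjN, hj, km]
  | cons c l ih =>
    have hc : 2 ≤ c := h2 c (by simp)
    have hc' : (2 : ℤ) ≤ (c : ℤ) := by exact_mod_cast hc
    obtain ⟨ih1, ih2, ih3⟩ := ih (fun x hx => h2 x (by simp [hx]))
    have hP0 : ((km l).1 : ℚ) ≠ 0 := by
      have : (0 : ℤ) < (km l).1 := by linarith
      positivity
    have hstep : hjN (c :: l) = ((km (c :: l)).1 : ℚ) / ((km (c :: l)).2.1 : ℚ) := by
      have : hjN (c :: l) = (c : ℚ) - 1 / hjN l := rfl
      rw [this, ih1, one_div_div]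
      simp only [km]
      push_cast
      field_simp
    refine ⟨hstep, ?_, ?_⟩
    · -- 1 ≤ new P = c * P - Q
      rcases eq_or_ne l [] with rfl | hne
      · simp only [km]; simp; omega
      · obtain ⟨i1, i2, i3, i4⟩ := ih3 hne
        simp only [km]; nlinarith
    · intro _
      rcases eq_or_ne l [] with rfl | hne
      · simp only [km]; refine ⟨?_, ?_, ?_, ?_⟩ <;> simp <;> omega
      · obtain ⟨i1, i2, i3, i4⟩ := ih3 hne
        simp only [km]
        refine ⟨by linarith, by nlinarith, by nlinarith, by nlinarith⟩

lemma km_eq (l : List ℕ) (h2 : ∀ x ∈ l, 2 ≤ x) (hne : l ≠ []) (m n : ℕ) (hn : 1 ≤ n)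
    (hmn : Nat.Coprime m n) (hcf : hjN l = (m : ℚ) / (n : ℚ)) :
    (km l).1 = (m : ℤ) ∧ (km l).2.1 = (n : ℤ) := by
  obtain ⟨h1, hP, hinv⟩ := km_main l h2
  obtain ⟨i1, i2, i3, i4⟩ := hinv hne
  have hQ : 1 ≤ (km l).2.1 := by linarith
  have hcross : (km l).1 * (n : ℤ) = (km l).2.1 * (m : ℤ) := by
    have h0 : ((km l).1 : ℚ) / ((km l).2.1 : ℚ) = (m : ℚ) / (n : ℚ) := by rw [← h1, hcf]
    have hQ0 : ((km l).2.1 : ℚ) ≠ 0 := by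
      have : (0:ℤ) < (km l).2.1 := by linarith
      exact_mod_cast this.ne'
    have hn0 : ((n : ℚ)) ≠ 0 := by positivity
    rw [div_eq_div_iff hQ0 hn0] at h0
    have : (km l).1 * (n : ℤ) = (m : ℤ) * (km l).2.1 := by exact_mod_cast h0
    linarith
  have hcop : IsCoprime (km l).1 (km l).2.1 :=
    ⟨-(km l).2.2.2, (km l).2.2.1, by linarith [km_det l]⟩
  have hcop2 : IsCoprime (m : ℤ) (n : ℤ) := hmn.isCoprime
  have hd1 : (km l).1 ∣ (m : ℤ) :=
    hcop.dvd_of_dvd_mul_right ⟨(n : ℤ), by linarith⟩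
  have hd2 : (m : ℤ) ∣ (km l).1 :=
    hcop2.dvd_of_dvd_mul_right ⟨(km l).2.1, by linarith⟩
  have hPm : (km l).1 = (m : ℤ) := Int.dvd_antisymm (by linarith) (by positivity) hd1 hd2
  refine ⟨hPm, ?_⟩
  have hm0 : (m : ℤ) ≠ 0 := by rw [← hPm]; intro h; omega
  rw [hPm] at hcross
  have : (n : ℤ) * (m : ℤ) = (km l).2.1 * (m : ℤ) := by linarith
  exact (mul_right_cancel₀ hm0 this).symm

theorem stmt5 (p q : ℕ) (hq : 1 ≤ q) (hpq : q < p) (hco : Nat.Coprime p q)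
    (a : List ℕ) (ha : a ≠ []) (b : List ℕ) (hb : b ≠ [])
    (ha2 : ∀ x ∈ a, 2 ≤ x) (hb2 : ∀ x ∈ b, 2 ≤ x)
    (hcfa : hjN a = (p : ℚ) / q)
    (hcfb : hjN b = (p : ℚ) / ((p - q : ℕ) : ℚ)) :
    hjN (a ++ [2] ++ b.reverse) = ((p ^ 2 : ℕ) : ℚ) / ((p * q + 1 : ℕ) : ℚ) := by
  have hpq1 : 1 ≤ p - q := by omega
  have hcast0 : ((p - q : ℕ) : ℤ) = -(q : ℤ) + (p : ℤ) * 1 := by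
    push_cast [Nat.cast_sub hpq.le]; ring
  have hco' : Nat.Coprime p (p - q) := by
    have h1 : IsCoprime ((p : ℕ) : ℤ) (((p - q : ℕ) : ℤ)) := by
      rw [hcast0]
      exact (hco.isCoprime.neg_right).add_mul_left_right 1
    exact Nat.isCoprime_iff_coprime.mp h1
  obtain ⟨hPa, hQa⟩ := km_eq a ha2 ha p q hq hco hcfa
  obtain ⟨hPb, hQb⟩ := km_eq b hb2 hb p (p - q) hpq1 hco' hcfb
  obtain ⟨hja, hPa1, hinva⟩ := km_main a ha2
  obtain ⟨ia1, ia2, ia3, ia4⟩ := hinva ha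
  obtain ⟨hjb, hPb1, hinvb⟩ := km_main b hb2
  obtain ⟨ib1, ib2, ib3, ib4⟩ := hinvb hb
  set x := (km a).2.2.1 with hx
  set y := (km a).2.2.2 with hy
  set z := (km b).2.2.1 with hz
  set w := (km b).2.2.2 with hw
  have hcast : ((p - q : ℕ) : ℤ) = (p : ℤ) - (q : ℤ) := by push_cast [Nat.cast_sub hpq.le]; ring
  have hp1 : (1 : ℤ) ≤ (p : ℤ) := by exact_mod_cast Nat.one_le_of_lt hpq
  have hq1 : (1 : ℤ) ≤ (q : ℤ) := by exact_mod_cast hq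
  have deta : x * (q : ℤ) - (p : ℤ) * y = 1 := by
    have h := km_det a; rw [hPa, hQa] at h; linarith
  have detb : z * ((p : ℤ) - q) - (p : ℤ) * w = 1 := by
    have h := km_det b; rw [hPb, hQb, hcast] at h; linarith
  -- bounds on x and z
  have hxlb : 1 ≤ x := by linarith
  have hxub : x ≤ (p : ℤ) - 1 := by
    rw [hPa, hQa] at ia4; linarith
  have hzlb : 1 ≤ z := by linarith
  have hzub : z ≤ (p : ℤ) - 1 := by
    rw [hPb, hQb, hcast] at ib4; linarith
  -- x + z = p
  have hdvd : (p : ℤ) ∣ (x + z) := by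
    have hco2 : IsCoprime (p : ℤ) (q : ℤ) := hco.isCoprime
    refine hco2.dvd_of_dvd_mul_left ⟨y + z - w, ?_⟩
    linear_combination deta - detb
  obtain ⟨k, hk⟩ := hdvd
  have hub : (p : ℤ) * k ≤ 2 * p - 2 := by rw [← hk]; linarith
  have hlb : 2 ≤ (p : ℤ) * k := by rw [← hk]; linarith
  have hkpos : 1 ≤ k := by
    by_contra h
    push_neg at h
    have hk0 : k ≤ 0 := by linarith
    have := mul_nonpos_of_nonneg_of_nonpos (by linarith : (0:ℤ) ≤ (p:ℤ)) hk0
    linarith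
  have hkle : k ≤ 1 := by
    by_contra h
    push_neg at h
    have h2k : 2 ≤ k := by linarith
    have : (p : ℤ) * 2 ≤ (p : ℤ) * k := mul_le_mul_of_nonneg_left h2k (by linarith)
    linarith
  have hk1 : k = 1 := le_antisymm hkle hkpos
  have hxz : x + z = (p : ℤ) := by rw [hk, hk1, mul_one]
  -- the concatenated list
  have h2L : ∀ v ∈ a ++ [2] ++ b.reverse, 2 ≤ v := by
    intro v hv
    simp only [List.mem_append, List.mem_reverse, List.mem_singleton] at hv
    rcases hv with (hv | rfl) | hv
    · exact ha2 v hv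
    · exact le_refl 2
    · exact hb2 v hv
  obtain ⟨hjL, -, -⟩ := km_main _ h2L
  have hkm : km (a ++ [2] ++ b.reverse) = comb (comb (km a) (km [2])) (km b.reverse) := by
    rw [km_append, km_append]
  have hkm2 : km [2] = ((2 : ℤ), 1, 1, 0) := by norm_num [km]
  have h1 : (km (a ++ [2] ++ b.reverse)).1 = (p : ℤ) ^ 2 := by
    rw [hkm, hkm2, km_reverse]
    simp only [comb, hPa, hQa, hPb, hQb, hcast]
    linear_combination (-(p : ℤ)) * hxz
  have h2 : (km (a ++ [2] ++ b.reverse)).2.1 = (p : ℤ) * q + 1 := by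
    rw [hkm, hkm2, km_reverse]
    simp only [comb, hPa, hQa, hPb, hQb, hcast]
    linear_combination deta - (q : ℤ) * hxz
  rw [hjL, h1, h2]
  push_cast
  ring
end

section
/- The smallest set of pairs of natural numbers containing (2, 1) and closed under the two operations (p, q) ↦ (p + q, q) and (p, q) ↦ (2p − q, p) equals the set {(p, q) : p > q ≥ 1, gcd(p, q) = 1}; that is, every pair (p, q) of coprime natural numbers with p > q ≥ 1 can be obtained from (2, 1) by a finite sequence of these two operations. -/
/-- The smallest set of pairs containing (2,1) and closed under
T₁(p,q) = (p+q, q) and T₂(p,q) = (2p−q, p). -/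
inductive Reach : ℕ → ℕ → Prop
  | base : Reach 2 1
  | t1 {p q : ℕ} : Reach p q → Reach (p + q) q
  | t2 {p q : ℕ} : Reach p q → Reach (2 * p - q) p

lemma reach_rev : ∀ n p q : ℕ, p + q ≤ n → 1 ≤ q → q < p → Nat.Coprime p q → Reach p q := by
  intro n
  induction n using Nat.strong_induction_on with
  | _ n ih =>
    intro p q hn hq hqp hcop
    rcases lt_trichotomy p (2 * q) with h | h | h
    · -- p < 2q : (p,q) = T₂ (q, 2q - p)
      have h1 : Reach q (2 * q - p) := by
        apply ih (q + (2 * q - p)) (by omega) q (2 * q - p) le_rfl (by omega) (by omega)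
        rw [← Nat.isCoprime_iff_coprime]
        have hc : ((2 * q - p : ℕ) : ℤ) = -(p : ℤ) + (q : ℤ) * 2 := by omega
        rw [hc]
        have : IsCoprime (q : ℤ) (p : ℤ) := Nat.isCoprime_iff_coprime.mpr hcop.symm
        exact this.neg_right.add_mul_left_right 2
      have h2 := Reach.t2 h1
      have : 2 * q - (2 * q - p) = p := by omega
      rwa [this] at h2
    · -- p = 2q : coprime forces q = 1
      have : q = 1 := by
        have hg : Nat.gcd p q = 1 := hcop
        have hd : q ∣ Nat.gcd p q := Nat.dvd_gcd ⟨2, by omega⟩ dvd_rfl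
        rw [hg] at hd
        exact Nat.dvd_one.mp hd
      subst this
      have : p = 2 := by omega
      subst this
      exact Reach.base
    · -- p > 2q : (p,q) = T₁ (p-q, q)
      have h1 : Reach (p - q) q := by
        apply ih (p - q + q) (by omega) (p - q) q le_rfl hq (by omega)
        rw [Nat.coprime_sub_self_left (le_of_lt hqp)]
        exact hcop
      have h2 := Reach.t1 h1
      have : p - q + q = p := by omega
      rwa [this] at h2

theorem stmt7 : ∀ p q : ℕ, Reach p q ↔ (1 ≤ q ∧ q < p ∧ Nat.Coprime p q) := by
  intro p q
  constructor
  · intro h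
    induction h with
    | base => exact ⟨le_refl 1, by omega, by decide⟩
    | t1 h ih =>
      obtain ⟨h1, h2, h3⟩ := ih
      exact ⟨h1, by omega, Nat.coprime_add_self_left.mpr h3⟩
    | @t2 p q h ih =>
      obtain ⟨h1, h2, h3⟩ := ih
      refine ⟨by omega, by omega, ?_⟩
      have : 2 * p - q = (p - q) + p := by omega
      rw [this, Nat.coprime_add_self_left, ← Nat.isCoprime_iff_coprime]
      have hc : ((p - q : ℕ) : ℤ) = -(q : ℤ) + (p : ℤ) * 1 := by omega
      rw [hc]
      exact ((Nat.isCoprime_iff_coprime.mpr h3).symm.neg_left.add_mul_left_left 1)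
  · intro ⟨h1, h2, h3⟩
    exact reach_rev (p + q) p q le_rfl h1 h2 h3
end

section
/- The two operations T₁(p,q) = (p+q, q) and T₂(p,q) = (2p−q, p) on coprime pairs with p > q ≥ 1 generate a binary tree: no pair in the set generated from (2,1) is reachable by two distinct sequences of operations (i.e., each coprime pair (p,q) with p > q ≥ 1 is obtained from (2,1) by a unique finite sequence of the operations T₁, T₂). -/
/-- One step: `true` is T₁(p,q) = (p+q,q), `false` is T₂(p,q) = (2p−q,p). -/
def stepOp (b : Bool) (x : ℕ × ℕ) : ℕ × ℕ :=
  if b then (x.1 + x.2, x.2) else (2 * x.1 - x.2, x.1)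

/-- Apply a finite sequence of the operations T₁, T₂. -/
def applySeq (s : List Bool) (x : ℕ × ℕ) : ℕ × ℕ :=
  s.foldl (fun y b => stepOp b y) x

def good (x : ℕ × ℕ) : Prop := 1 ≤ x.2 ∧ x.2 < x.1

lemma applySeq_nil (x : ℕ × ℕ) : applySeq [] x = x := rfl

lemma applySeq_cons (b : Bool) (s : List Bool) (x : ℕ × ℕ) :
    applySeq (b :: s) x = applySeq s (stepOp b x) := rfl

lemma applySeq_append_singleton (s : List Bool) (b : Bool) (x : ℕ × ℕ) :
    applySeq (s ++ [b]) x = stepOp b (applySeq s x) := by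
  simp [applySeq, List.foldl_append]

lemma good_step (b : Bool) {x : ℕ × ℕ} (h : good x) : good (stepOp b x) := by
  obtain ⟨h1, h2⟩ := h
  cases b <;> simp [stepOp, good] <;> omega

lemma fst_lt_step (b : Bool) {x : ℕ × ℕ} (h : good x) : x.1 < (stepOp b x).1 := by
  obtain ⟨h1, h2⟩ := h
  cases b <;> simp [stepOp] <;> omega

lemma good_applySeq (s : List Bool) : ∀ x : ℕ × ℕ, good x → good (applySeq s x) := by
  induction s with
  | nil => intro x hx; exact hx
  | cons b s ih => intro x hx; rw [applySeq_cons]; exact ih _ (good_step b hx)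

lemma fst_le_applySeq (s : List Bool) : ∀ x : ℕ × ℕ, good x → x.1 ≤ (applySeq s x).1 := by
  induction s with
  | nil => intro x hx; exact le_rfl
  | cons b s ih =>
    intro x hx
    rw [applySeq_cons]
    exact le_trans (le_of_lt (fst_lt_step b hx)) (ih _ (good_step b hx))

lemma step_inj {x y : ℕ × ℕ} {b c : Bool} (hx : good x) (hy : good y)
    (h : stepOp b x = stepOp c y) : b = c ∧ x = y := by
  obtain ⟨p, q⟩ := x
  obtain ⟨r, s⟩ := y
  obtain ⟨h1, h2⟩ := hx
  obtain ⟨h3, h4⟩ := hy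
  simp only at h1 h2 h3 h4
  cases b <;> cases c <;> simp_all [stepOp, Prod.ext_iff] <;> omega

theorem stmt9 : ∀ s t : List Bool, applySeq s (2, 1) = applySeq t (2, 1) → s = t := by
  have key : ∀ s t : List Bool, ∀ x : ℕ × ℕ, good x →
      applySeq s x = applySeq t x → s = t := by
    intro s
    induction s using List.reverseRecOn with
    | nil =>
      intro t x hx h
      cases t using List.reverseRecOn with
      | nil => rfl
      | append_singleton t' c =>
        exfalso
        rw [applySeq_nil, applySeq_append_singleton] at h
        have h1 := fst_le_applySeq t' x hx
        have h2 := fst_lt_step c (good_applySeq t' x hx)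
        rw [← h] at h2
        omega
    | append_singleton s' b ih =>
      intro t x hx h
      cases t using List.reverseRecOn with
      | nil =>
        exfalso
        rw [applySeq_nil, applySeq_append_singleton] at h
        have h1 := fst_le_applySeq s' x hx
        have h2 := fst_lt_step b (good_applySeq s' x hx)
        rw [h] at h2
        omega
      | append_singleton t' c =>
        rw [applySeq_append_singleton, applySeq_append_singleton] at h
        obtain ⟨hbc, heq⟩ := step_inj (good_applySeq s' x hx) (good_applySeq t' x hx) h
        rw [hbc, ih t' x hx heq]
  intro s t h
  exact key s t (2, 1) ⟨by norm_num, by norm_num⟩ h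
end

section
/- For every natural number n ≥ 1, F(2n+2)/(F(2n+2) − F(2n)) = [2, 3, 3, ..., 3, 2] as a Hirzebruch–Jung continued fraction, where there are n−1 threes between the two twos. -/
lemma fib_pos' (m : ℕ) : (0 : ℚ) < Nat.fib (m + 1) := by
  exact_mod_cast Nat.fib_pos.mpr (Nat.succ_pos m)

lemma hjN_cons (a : ℕ) (l : List ℕ) : hjN (a :: l) = a - 1 / hjN l := rfl

lemma aux (k : ℕ) : hjN (List.replicate k 3 ++ [2])
    = (Nat.fib (2 * k + 3) : ℚ) / Nat.fib (2 * k + 1) := by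
  induction k with
  | zero => norm_num [hjN, hj]
  | succ k ih =>
    rw [List.replicate_succ, List.cons_append, hjN_cons, ih]
    have h1 : (0 : ℚ) < Nat.fib (2 * k + 1) := fib_pos' _
    have h3 : (0 : ℚ) < Nat.fib (2 * k + 3) := fib_pos' _
    have e1 : Nat.fib (2 * k + 3) + Nat.fib (2 * k + 4) = Nat.fib (2 * k + 5) :=
      (Nat.fib_add_two).symm
    have e2 : Nat.fib (2 * k + 2) + Nat.fib (2 * k + 3) = Nat.fib (2 * k + 4) :=
      (Nat.fib_add_two).symm
    have e3 : Nat.fib (2 * k + 1) + Nat.fib (2 * k + 2) = Nat.fib (2 * k + 3) :=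
      (Nat.fib_add_two).symm
    have h5 : 2 * (k + 1) + 3 = 2 * k + 5 := by ring
    have h1' : 2 * (k + 1) + 1 = 2 * k + 3 := by ring
    rw [h5, h1', one_div_div]
    field_simp
    push_cast [← e1, ← e2, ← e3]
    ring

theorem stmt12 (n : ℕ) (hn : 1 ≤ n) :
    hjN (2 :: (List.replicate (n - 1) 3 ++ [2])) =
      (Nat.fib (2 * n + 2) : ℚ) / ((Nat.fib (2 * n + 2) - Nat.fib (2 * n) : ℕ) : ℚ) := by
  obtain ⟨m, rfl⟩ := Nat.exists_eq_add_of_le hn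
  have hm : 1 + m - 1 = m := by omega
  have hfs : Nat.fib (2 * (1 + m) + 2) - Nat.fib (2 * (1 + m)) = Nat.fib (2 * (1 + m) + 1) := by
    have := Nat.fib_add_two (n := 2 * (1 + m))
    omega
  rw [hfs, hm]
  rw [hjN_cons, aux]
  have h1 : (0 : ℚ) < Nat.fib (2 * m + 1) := fib_pos' _
  have h3 : (0 : ℚ) < Nat.fib (2 * m + 3) := fib_pos' _
  have e2 : Nat.fib (2 * m + 2) + Nat.fib (2 * m + 3) = Nat.fib (2 * m + 4) :=
    (Nat.fib_add_two).symm
  have e3 : Nat.fib (2 * m + 1) + Nat.fib (2 * m + 2) = Nat.fib (2 * m + 3) :=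
    (Nat.fib_add_two).symm
  have ha : 2 * (1 + m) + 2 = 2 * m + 4 := by ring
  have hb : 2 * (1 + m) + 1 = 2 * m + 3 := by ring
  rw [ha, hb, one_div_div]
  field_simp
  push_cast [← e2, ← e3]
  ring
end
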